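/- arXiv:cs/0211007 — 2 statements merged into one kernel-verified Lean document; each statement's English description precedes it below -/
import Mathlib

section
/- Let M be an ℓ×ℓ positive definite matrix with block inverse M⁻¹ = [[S_vv, S_vh],[S_vhᵀ, S_hh]] (S_vv of size n×n, S_hh of size m×m, n+m = ℓ), and let K_I be n×n positive definite. Then among all positive definite completions D = [[K_I, D_vh],[D_vhᵀ, D_hh]], the function D ↦ tr(DM⁻¹) − log det D is minimized by D_vh = −K_I S_vh S_hh⁻¹ and D_hh = S_hh⁻¹ + S_hh⁻¹ S_vhᵀ K_I S_vh S_hh⁻¹. -/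
open Matrix Real

/-!
With `S = M⁻¹`, the completion `D₀` is the inverse of the matrix `E` obtained from `S` by
replacing its top-left block with `KI⁻¹ + S_vh S_hh⁻¹ S_vhᵀ`; `E` is positive definite because its
Schur complement with respect to `S_hh` is `KI⁻¹`. Every admissible `D` has top-left block `KI` and
`S - E` vanishes outside that block, so `tr (D S) - tr (D E)` does not depend on `D`. It remains to
minimize `D ↦ tr (D E) - log det D`, which is the log-det inequality: with `s = √E`, the matrix
`s D s` has `tr - log det ≥ card`, since `λ - log λ ≥ 1` for each of its eigenvalues.
-/

namespace Matrix

variable {n m : Type*} [Fintype n] [Fintype m]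

theorem trace_mul_fromBlocks_zero {α : Type*} [NonUnitalNonAssocSemiring α]
    (D : Matrix (n ⊕ m) (n ⊕ m) α) (A : Matrix n n α) :
    (D * fromBlocks A 0 0 0).trace = (D.toBlocks₁₁ * A).trace := by
  rw [← fromBlocks_toBlocks D, fromBlocks_multiply]
  simp [trace, Fintype.sum_sum_type]

variable [DecidableEq n] [DecidableEq m]

theorem fromBlocks_mul_fromBlocks_add_mul_inv_mul_eq_one {α : Type*} [CommRing α]
    {K : Matrix n n α} {C : Matrix m m α} (hK : IsUnit K.det) (hC : IsUnit C.det)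
    (hKs : K.IsSymm) (hCs : C.IsSymm) (B : Matrix n m α) :
    fromBlocks K (-(K * B * C⁻¹)) (-(K * B * C⁻¹))ᵀ (C⁻¹ + C⁻¹ * Bᵀ * K * B * C⁻¹) *
      fromBlocks (K⁻¹ + B * C⁻¹ * Bᵀ) B Bᵀ C = 1 := by
  have hCinvs : C⁻¹ᵀ = C⁻¹ := by rw [transpose_nonsing_inv, hCs.eq]
  rw [fromBlocks_multiply, ← fromBlocks_one]
  congr 1
  · simp [Matrix.mul_add, Matrix.mul_assoc, mul_nonsing_inv _ hK]
  · simp [Matrix.mul_assoc, nonsing_inv_mul _ hC]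
  · simp [transpose_mul, hCinvs, hKs.eq, Matrix.mul_add, Matrix.add_mul, Matrix.mul_assoc,
      mul_nonsing_inv _ hK]
    abel
  · simp [transpose_mul, hCinvs, hKs.eq, Matrix.add_mul, Matrix.mul_assoc, nonsing_inv_mul _ hC]

open scoped ComplexOrder in
theorem PosDef.fromBlocks_add_mul_inv_mul {𝕜 : Type*} [RCLike 𝕜]
    {K : Matrix n n 𝕜} {C : Matrix m m 𝕜} (hK : K.PosDef) (hC : C.PosDef) (B : Matrix n m 𝕜) :
    (fromBlocks (K⁻¹ + B * C⁻¹ * Bᴴ) B Bᴴ C).PosDef := by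
  have := hC.isUnit.invertible
  have hsemi : (fromBlocks (K⁻¹ + B * C⁻¹ * Bᴴ) B Bᴴ C).PosSemidef := by
    rw [PosDef.fromBlocks₂₂ _ _ hC, add_sub_cancel_right]
    exact hK.inv.posSemidef
  rw [hsemi.posDef_iff_det_ne_zero, det_fromBlocks₂₂, invOf_eq_nonsing_inv, add_sub_cancel_right]
  exact mul_ne_zero hC.det_pos.ne' hK.inv.det_pos.ne'

theorem PosDef.card_le_trace_sub_log_det {X : Matrix n n ℝ} (hX : X.PosDef) :
    (Fintype.card n : ℝ) ≤ X.trace - log X.det := by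
  have hpos := hX.eigenvalues_pos
  rw [hX.1.trace_eq_sum_eigenvalues, hX.1.det_eq_prod_eigenvalues]
  simp only [RCLike.ofReal_real_eq_id, id_eq]
  rw [log_prod fun i _ => (hpos i).ne', ← Finset.sum_sub_distrib, Fintype.card_eq_sum_ones]
  push_cast
  exact Finset.sum_le_sum fun i _ => by linarith [log_le_sub_one_of_pos (hpos i)]

open scoped MatrixOrder in
theorem PosDef.card_le_trace_mul_sub_log_det_sub_log_det {P Q : Matrix n n ℝ}
    (hP : P.PosDef) (hQ : Q.PosDef) :
    (Fintype.card n : ℝ) ≤ (Q * P).trace - log Q.det - log P.det := by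
  set s := CFC.sqrt P
  have hs : star s = s := (CFC.sqrt_nonneg P).isSelfAdjoint
  have hss : s * s = P := CFC.sqrt_mul_sqrt_self P hP.posSemidef.nonneg
  have hsu : IsUnit s := (CFC.isUnit_sqrt_iff P hP.posSemidef.nonneg).mpr hP.isUnit
  have hX : (star s * Q * s).PosDef := (IsUnit.posDef_star_left_conjugate_iff hsu).mpr hQ
  have htr : (star s * Q * s).trace = (Q * P).trace := by
    rw [hs, trace_mul_cycle, hss, trace_mul_comm]
  have hdet : (star s * Q * s).det = Q.det * P.det := by
    rw [hs, det_mul, det_mul, ← hss, det_mul]; ring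
  have := hX.card_le_trace_sub_log_det
  rw [htr, hdet, log_mul hQ.det_pos.ne' hP.det_pos.ne'] at this
  linarith

theorem PosDef.trace_inv_mul_sub_log_det_inv_le {P Q : Matrix n n ℝ}
    (hP : P.PosDef) (hQ : Q.PosDef) :
    (P⁻¹ * P).trace - log P⁻¹.det ≤ (Q * P).trace - log Q.det := by
  have hPu : IsUnit P.det := hP.det_pos.ne'.isUnit
  have := hP.card_le_trace_mul_sub_log_det_sub_log_det hQ
  rw [nonsing_inv_mul _ hPu, trace_one, det_nonsing_inv, Ring.inverse_eq_inv', log_inv]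
  linarith

end Matrix

theorem e_projection_minimizes (n m : ℕ)
    (M : Matrix (Fin n ⊕ Fin m) (Fin n ⊕ Fin m) ℝ) (hM : M.PosDef)
    (KI : Matrix (Fin n) (Fin n) ℝ) (hKI : KI.PosDef)
    (Svh : Matrix (Fin n) (Fin m) ℝ) (Shh : Matrix (Fin m) (Fin m) ℝ)
    (hSvh : Svh = M⁻¹.toBlocks₁₂) (hShh : Shh = M⁻¹.toBlocks₂₂)
    (D₀ : Matrix (Fin n ⊕ Fin m) (Fin n ⊕ Fin m) ℝ)
    (hD₀ : D₀ = fromBlocks KI (-(KI * Svh * Shh⁻¹)) (-(KI * Svh * Shh⁻¹))ᵀ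
        (Shh⁻¹ + Shh⁻¹ * Svhᵀ * KI * Svh * Shh⁻¹)) :
    D₀.PosDef ∧ D₀.toBlocks₁₁ = KI ∧
      ∀ D : Matrix (Fin n ⊕ Fin m) (Fin n ⊕ Fin m) ℝ,
        D.PosDef → D.toBlocks₁₁ = KI →
          (D₀ * M⁻¹).trace - Real.log D₀.det ≤ (D * M⁻¹).trace - Real.log D.det := by
  have hS : M⁻¹.PosDef := hM.inv
  obtain ⟨-, hS₂₁, -, -⟩ := isHermitian_fromBlocks_iff.mp (M⁻¹.fromBlocks_toBlocks ▸ hS.1)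
  rw [← hSvh, conjTranspose_eq_transpose_of_trivial] at hS₂₁
  have hShh_pd : Shh.PosDef := hShh ▸ hS.submatrix Sum.inr_injective
  set E := fromBlocks (KI⁻¹ + Svh * Shh⁻¹ * Svhᵀ) Svh Svhᵀ Shh
  have hE : E.PosDef := by
    simpa only [conjTranspose_eq_transpose_of_trivial] using
      hKI.fromBlocks_add_mul_inv_mul hShh_pd Svh
  have hD₀E : D₀ = E⁻¹ := by
    refine (inv_eq_left_inv ?_).symm
    rw [hD₀]
    exact fromBlocks_mul_fromBlocks_add_mul_inv_mul_eq_one hKI.det_pos.ne'.isUnit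
      hShh_pd.det_pos.ne'.isUnit (isHermitian_iff_isSymm.mp hKI.1)
      (isHermitian_iff_isSymm.mp hShh_pd.1) Svh
  have hSE : M⁻¹ = E + fromBlocks (M⁻¹.toBlocks₁₁ - (KI⁻¹ + Svh * Shh⁻¹ * Svhᵀ)) 0 0 0 := by
    conv_lhs => rw [← M⁻¹.fromBlocks_toBlocks, ← hSvh, ← hShh, ← hS₂₁]
    rw [fromBlocks_add]
    simp
  have htr : ∀ D : Matrix (Fin n ⊕ Fin m) (Fin n ⊕ Fin m) ℝ, D.toBlocks₁₁ = KI →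
      (D * M⁻¹).trace =
        (D * E).trace + (KI * (M⁻¹.toBlocks₁₁ - (KI⁻¹ + Svh * Shh⁻¹ * Svhᵀ))).trace := by
    intro D hD
    conv_lhs => rw [hSE]
    rw [Matrix.mul_add, trace_add, trace_mul_fromBlocks_zero, hD]
  have hD₀₁₁ : D₀.toBlocks₁₁ = KI := by simp [hD₀]
  refine ⟨hD₀E ▸ hE.inv, hD₀₁₁, fun D hD hD₁₁ => ?_⟩
  rw [htr D₀ hD₀₁₁, htr D hD₁₁, hD₀E]
  linarith [hE.trace_inv_mul_sub_log_det_inv_le hD]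
end

section
/- If D₀ is the e-projection of M onto the m-flat data manifold 𝒟 (the minimizer over D ∈ 𝒟 of KL(D,M)), then for any D ∈ 𝒟 the Pythagorean relation KL(D,M) = KL(D,D₀) + KL(D₀,M) holds, where KL(P,Q) = tr(Q⁻¹P) + log det Q − log det P − d. -/
open Matrix Real

/-- KL divergence between positive definite matrices (covariances of
zero-mean Gaussians), up to the factor 1/2. -/
noncomputable def klDiv {ι : Type*} [Fintype ι] [DecidableEq ι] (P Q : Matrix ι ι ℝ) : ℝ :=
  (Q⁻¹ * P).trace + Real.log Q.det - Real.log P.det - Fintype.card ι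

/-!
The e-projection `D₀` has `D₀⁻¹ = M⁻¹` outside the top-left block, while every `D ∈ 𝒟` agrees
with `D₀` on that block. Hence `M⁻¹ - D₀⁻¹` and `D - D₀` have disjoint block supports and
`tr((M⁻¹ - D₀⁻¹)(D - D₀)) = 0`; this trace is exactly the defect in the Pythagorean relation
for any three matrices.
-/

namespace Matrix

variable {α n m : Type*}

theorem IsSymm.toBlocks₁₂_transpose {A : Matrix (n ⊕ m) (n ⊕ m) α} (hA : A.IsSymm) :
    A.toBlocks₁₂ᵀ = A.toBlocks₂₁ :=
  (isSymm_fromBlocks_iff.mp ((fromBlocks_toBlocks A).symm ▸ hA)).2.1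

theorem PosDef.toBlocks₂₂ {R : Type*} [CommRing R] [PartialOrder R] [StarRing R]
    {A : Matrix (n ⊕ m) (n ⊕ m) R} (hA : A.PosDef) : A.toBlocks₂₂.PosDef :=
  hA.submatrix Sum.inr_injective

theorem trace_fromBlocks_zero_mul [Fintype n] [Fintype m] [NonUnitalNonAssocSemiring α]
    (E : Matrix n n α) (B : Matrix (n ⊕ m) (n ⊕ m) α) :
    (fromBlocks E 0 0 0 * B).trace = (E * B.toBlocks₁₁).trace := by
  conv_lhs => rw [← fromBlocks_toBlocks B]
  simp [fromBlocks_multiply, trace, Fintype.sum_sum_type]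

theorem fromBlocks_eProjection_mul_eq_one [Fintype n] [Fintype m] [DecidableEq n] [DecidableEq m]
    [CommRing α] {K : Matrix n n α} {B : Matrix n m α} {S : Matrix m m α}
    (hK : K.IsSymm) (hS : S.IsSymm) (hKu : IsUnit K.det) (hSu : IsUnit S.det) :
    fromBlocks K (-(K * B * S⁻¹)) (-(K * B * S⁻¹))ᵀ (S⁻¹ + S⁻¹ * Bᵀ * K * B * S⁻¹) *
      fromBlocks (K⁻¹ + B * S⁻¹ * Bᵀ) B Bᵀ S = 1 := by
  have hSinv : (S⁻¹)ᵀ = S⁻¹ := by rw [transpose_nonsing_inv, hS.eq]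
  rw [fromBlocks_multiply, ← fromBlocks_one, fromBlocks_inj]
  simp only [transpose_neg, transpose_mul, hSinv, hK.eq, Matrix.neg_mul,
    Matrix.mul_add, Matrix.add_mul, Matrix.mul_assoc, mul_nonsing_inv K hKu,
    nonsing_inv_mul S hSu, Matrix.mul_one]
  refine ⟨by abel, by abel, by abel, by abel⟩

end Matrix

theorem klDiv_eq_klDiv_add_klDiv_add_trace {ι : Type*} [Fintype ι] [DecidableEq ι]
    (P Q R : Matrix ι ι ℝ) (hR : IsUnit R.det) :
    klDiv P Q = klDiv P R + klDiv R Q + ((Q⁻¹ - R⁻¹) * (P - R)).trace := by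
  simp only [klDiv, sub_mul, mul_sub, trace_sub, nonsing_inv_mul R hR, trace_one]
  ring

theorem pythagorean_e_projection (n m : ℕ)
    (M : Matrix (Fin n ⊕ Fin m) (Fin n ⊕ Fin m) ℝ) (hM : M.PosDef)
    (KI : Matrix (Fin n) (Fin n) ℝ) (hKI : KI.PosDef)
    (Svh : Matrix (Fin n) (Fin m) ℝ) (Shh : Matrix (Fin m) (Fin m) ℝ)
    (hSvh : Svh = M⁻¹.toBlocks₁₂) (hShh : Shh = M⁻¹.toBlocks₂₂)
    (D₀ : Matrix (Fin n ⊕ Fin m) (Fin n ⊕ Fin m) ℝ)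
    (hD₀ : D₀ = fromBlocks KI (-(KI * Svh * Shh⁻¹)) (-(KI * Svh * Shh⁻¹))ᵀ
        (Shh⁻¹ + Shh⁻¹ * Svhᵀ * KI * Svh * Shh⁻¹)) :
    ∀ D : Matrix (Fin n ⊕ Fin m) (Fin n ⊕ Fin m) ℝ,
      D.PosDef → D.toBlocks₁₁ = KI →
        klDiv D M = klDiv D D₀ + klDiv D₀ M := by
  intro D _ hD
  have hMinv : M⁻¹.PosDef := hM.inv
  have hShh_posDef : Shh.PosDef := hShh ▸ hMinv.toBlocks₂₂
  have hD₀_mul : D₀ * fromBlocks (KI⁻¹ + Svh * Shh⁻¹ * Svhᵀ) Svh Svhᵀ Shh = 1 :=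
    hD₀ ▸ fromBlocks_eProjection_mul_eq_one (isHermitian_iff_isSymm.mp hKI.1)
      (isHermitian_iff_isSymm.mp hShh_posDef.1) hKI.det_pos.ne'.isUnit
      hShh_posDef.det_pos.ne'.isUnit
  have hdiff : M⁻¹ - D₀⁻¹ = fromBlocks (M⁻¹.toBlocks₁₁ - (KI⁻¹ + Svh * Shh⁻¹ * Svhᵀ)) 0 0 0 := by
    rw [inv_eq_right_inv hD₀_mul, hSvh, hShh,
      (isHermitian_iff_isSymm.mp hMinv.1).toBlocks₁₂_transpose]
    nth_rw 1 [← fromBlocks_toBlocks M⁻¹]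
    rw [sub_eq_add_neg, fromBlocks_neg, fromBlocks_add]
    congr 1 <;> abel
  have hD₁₁ : (D - D₀).toBlocks₁₁ = 0 := by
    rw [hD₀]
    ext i j
    simp [toBlocks₁₁, ← hD]
  rw [klDiv_eq_klDiv_add_klDiv_add_trace D M D₀ (isUnit_det_of_right_inverse hD₀_mul), hdiff,
    trace_fromBlocks_zero_mul, hD₁₁, Matrix.mul_zero, trace_zero, add_zero]
end
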